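/- arXiv:math/9803078 — 4 statements merged into one kernel-verified Lean document; each statement's English description precedes it below -/
import Mathlib

section
/- Let R be a regular local ring containing a field of characteristic zero, and let ν be a rank 1 valuation of the quotient field of R which is nonnegative on R. If z₁, z₂, … is an infinite sequence of elements of R with ν(z₁) < ν(z₂) < ⋯ strictly increasing, then ν(zₙ) → ∞; equivalently, for every real number ρ only finitely many values assumed by ν on R are ≤ ρ. -/
/-!
On `R` put `w = v ∘ algebraMap`, so `w ≤ 1`, and for `c : ℝ≥0` let `{w ≤ c}` be the sublevel
ideal. Along values of `w` these ideals increase strictly with `c`, so Noetherianity forbids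
infinite increasing chains of values. For decreasing chains of values `≥ ρ > 0`, localize at
the center `p = {w < 1}`: `w` extends to `R_p` with `w < 1` on its maximal ideal `m`, whose
finitely many generators therefore have values at most some `θ < 1`; hence `m ^ n ⊆ {w ≤ ρ}`
once `θ ^ n < ρ`, and the sublevel ideals for `c ≥ ρ` form a chain in the Artinian ring
`R_p ⧸ m ^ n`. A linear order that is well-founded in both directions is finite. A strictly
decreasing sequence of values with positive infimum would take infinitely many values above it,
so its limit is `0`.
-/

open scoped NNReal
open Filter IsLocalRing

lemma IsLocalRing.isArtinianRing_quotient_maximalIdeal_pow {A : Type*} [CommRing A]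
    [IsLocalRing A] [IsNoetherianRing A] {n : ℕ} (hn : n ≠ 0) :
    IsArtinianRing (A ⧸ maximalIdeal A ^ n) :=
  quotient_artinian_of_mem_minimalPrimes_of_isLocalRing _ <| by
    rw [← Ideal.radical_minimalPrimes, Ideal.radical_pow _ hn,
      (maximalIdeal.isMaximal A).isPrime.radical, Ideal.minimalPrimes_eq_subsingleton_self]
    rfl

lemma Ideal.wellFoundedLT_of_isArtinianRing_quotient {A : Type*} [CommRing A] (I : Ideal A)
    [IsArtinianRing (A ⧸ I)] : WellFoundedLT {J : Ideal A // I ≤ J} :=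
  let e := (relIsoOfSurjective (Quotient.mk I) Quotient.mk_surjective).symm
  (e.strictMono.comp (f := fun J => ⟨J.1, mk_ker.le.trans J.2⟩) fun _ _ h => h).wellFoundedLT

namespace Valuation

variable {R : Type*} [CommRing R] (w : Valuation R ℝ≥0)

section SublevelIdeal

variable (hw : ∀ r, w r ≤ 1)

def sublevelIdeal (c : ℝ≥0) : Ideal R where
  carrier := {a | w a ≤ c}
  add_mem' ha hb := (w.map_add _ _).trans (max_le ha hb)
  zero_mem' := by simp
  smul_mem' r a ha := (w.map_mul r a).le.trans ((mul_le_of_le_one_left' (hw r)).trans ha)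

def center : Ideal R where
  carrier := {a | w a < 1}
  add_mem' ha hb := (w.map_add _ _).trans_lt (max_lt ha hb)
  zero_mem' := by simp
  smul_mem' r a ha := (w.map_mul r a).le.trans_lt ((mul_le_of_le_one_left' (hw r)).trans_lt ha)

variable {w hw}

@[simp]
lemma mem_sublevelIdeal {c : ℝ≥0} {a : R} : a ∈ sublevelIdeal w hw c ↔ w a ≤ c := Iff.rfl

@[simp]
lemma mem_center {a : R} : a ∈ center w hw ↔ w a < 1 := Iff.rfl

lemma eq_one_of_notMem_center {a : R} (ha : a ∉ center w hw) : w a = 1 :=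
  (hw a).antisymm (not_lt.mp ha)

variable (w hw)

instance center_isPrime : (center w hw).IsPrime where
  ne_top' := (Ideal.ne_top_iff_one _).mpr (by simp)
  mem_or_mem' {a b} hab := by
    by_contra! h
    simp [eq_one_of_notMem_center h.1, eq_one_of_notMem_center h.2] at hab

lemma sublevelIdeal_mono : Monotone (sublevelIdeal w hw) :=
  fun _ _ hcd _ ha => le_trans ha hcd

lemma sublevelIdeal_strictMonoOn : StrictMonoOn (sublevelIdeal w hw) (Set.range w) := by
  rintro c - _ ⟨a, rfl⟩ hc
  refine (sublevelIdeal_mono w hw hc.le).lt_of_ne fun h => ?_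
  have ha : a ∈ sublevelIdeal w hw c := h ▸ mem_sublevelIdeal.mpr le_rfl
  exact (mem_sublevelIdeal.mp ha).not_gt hc

lemma sublevelIdeal_pow_le (c : ℝ≥0) (n : ℕ) :
    sublevelIdeal w hw c ^ n ≤ sublevelIdeal w hw (c ^ n) := by
  induction n with
  | zero =>
    rw [pow_zero, pow_zero, Ideal.one_eq_top]
    exact fun a _ => hw a
  | succ n ih =>
    rw [pow_succ, pow_succ]
    exact (Ideal.mul_mono_left ih).trans <| Ideal.mul_le.mpr fun a ha b hb => by
      simpa using mul_le_mul' (mem_sublevelIdeal.mp ha) (mem_sublevelIdeal.mp hb)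

lemma exists_maximalIdeal_pow_le_sublevelIdeal [IsLocalRing R] [IsNoetherianRing R]
    (hm : ∀ a ∈ maximalIdeal R, w a < 1) {ρ : ℝ≥0} (hρ : 0 < ρ) :
    ∃ n ≠ 0, maximalIdeal R ^ n ≤ sublevelIdeal w hw ρ := by
  obtain ⟨T, hT⟩ := (maximalIdeal R).fg_of_isNoetherianRing
  set θ := T.sup w
  have hθ : θ < 1 := (Finset.sup_lt_iff zero_lt_one).mpr fun t ht =>
    hm t (hT ▸ Ideal.subset_span ht)
  have hmθ : maximalIdeal R ≤ sublevelIdeal w hw θ :=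
    hT ▸ Ideal.span_le.mpr fun t ht => Finset.le_sup (f := w) ht
  obtain ⟨n, hn⟩ := exists_pow_lt_of_lt_one hρ hθ
  refine ⟨n + 1, n.succ_ne_zero, ?_⟩
  calc maximalIdeal R ^ (n + 1)
      ≤ sublevelIdeal w hw θ ^ (n + 1) := Ideal.pow_right_mono hmθ _
    _ ≤ sublevelIdeal w hw (θ ^ (n + 1)) := sublevelIdeal_pow_le w hw θ _
    _ ≤ sublevelIdeal w hw ρ :=
      sublevelIdeal_mono w hw ((pow_le_pow_of_le_one zero_le hθ.le n.le_succ).trans hn.le)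

end SublevelIdeal

theorem finite_range_inter_Ici_of_isLocalRing [IsLocalRing R] [IsNoetherianRing R]
    (hw : ∀ r, w r ≤ 1) (hm : ∀ a ∈ maximalIdeal R, w a < 1) {ρ : ℝ≥0} (hρ : 0 < ρ) :
    (Set.range w ∩ Set.Ici ρ).Finite := by
  obtain ⟨n, hn, hle⟩ := exists_maximalIdeal_pow_le_sublevelIdeal w hw hm hρ
  have := isArtinianRing_quotient_maximalIdeal_pow (A := R) hn
  have := (maximalIdeal R ^ n).wellFoundedLT_of_isArtinianRing_quotient
  set S := Set.range w ∩ Set.Ici ρ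
  have hmono : StrictMono fun c : S => sublevelIdeal w hw c :=
    fun c d h => sublevelIdeal_strictMonoOn w hw c.2.1 d.2.1 h
  have : WellFoundedGT S := hmono.wellFoundedGT
  have : WellFoundedLT S :=
    (show StrictMono fun c : S => (⟨sublevelIdeal w hw c,
      hle.trans (sublevelIdeal_mono w hw c.2.2)⟩ : {J // maximalIdeal R ^ n ≤ J}) from
      hmono).wellFoundedLT
  exact Set.finite_coe_iff.mp (Finite.of_wellFoundedLT_wellFoundedGT S)

theorem finite_range_inter_Ici [IsNoetherianRing R] (hw : ∀ r, w r ≤ 1) {ρ : ℝ≥0}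
    (hρ : 0 < ρ) : (Set.range w ∩ Set.Ici ρ).Finite := by
  let A := Localization.AtPrime (center w hw)
  have hS : (center w hw).primeCompl ≤ w.supp.primeCompl := fun s hs => by
    simp [eq_one_of_notMem_center hs]
  let w' := w.extendToLocalization hS A
  have hw' (x : R) (s : (center w hw).primeCompl) : w' (IsLocalization.mk' A x s) = w x := by
    simp [w', eq_one_of_notMem_center s.2]
  refine (finite_range_inter_Ici_of_isLocalRing w' ?_ ?_ hρ).subset ?_
  · intro a
    obtain ⟨⟨x, s⟩, rfl⟩ := IsLocalization.mk'_surjective (center w hw).primeCompl a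
    exact hw' x s ▸ hw x
  · intro a ha
    obtain ⟨⟨x, s⟩, rfl⟩ := IsLocalization.mk'_surjective (center w hw).primeCompl a
    rw [IsLocalization.AtPrime.mk'_mem_maximal_iff A (center w hw)] at ha
    exact hw' x s ▸ ha
  · rintro _ ⟨⟨r, rfl⟩, hr⟩
    exact ⟨⟨algebraMap R A r, by simp [w']⟩, hr⟩

end Valuation

theorem stmt_1_general (R : Type*) [CommRing R] [IsNoetherianRing R]
    (v : Valuation (FractionRing R) ℝ≥0)
    (hnonneg : ∀ r : R, v (algebraMap R (FractionRing R) r) ≤ 1) :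
    (∀ z : ℕ → R, (∀ n, z n ≠ 0) →
        StrictAnti (fun n => v (algebraMap R (FractionRing R) (z n))) →
        Tendsto (fun n => v (algebraMap R (FractionRing R) (z n))) atTop (nhds 0)) ∧
      ∀ ρ : ℝ≥0, 0 < ρ →
        {c : ℝ≥0 | ρ ≤ c ∧ ∃ z : R, z ≠ 0 ∧ v (algebraMap R (FractionRing R) z) = c}.Finite := by
  have hfin (ρ : ℝ≥0) (hρ : 0 < ρ) :
      {c : ℝ≥0 | ρ ≤ c ∧ ∃ z : R, z ≠ 0 ∧ v (algebraMap R (FractionRing R) z) = c}.Finite :=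
    ((v.comap (algebraMap R (FractionRing R))).finite_range_inter_Ici hnonneg hρ).subset
      fun _ ⟨hc, z, _, hz⟩ => ⟨⟨z, hz⟩, hc⟩
  refine ⟨fun z hz hanti => ?_, hfin⟩
  have hlim := tendsto_atTop_ciInf hanti.antitone (OrderBot.bddBelow _)
  convert hlim
  by_contra! hinf
  refine Set.infinite_range_of_injective hanti.injective ((hfin _ hinf.symm.bot_lt).subset ?_)
  rintro _ ⟨n, rfl⟩
  exact ⟨ciInf_le (OrderBot.bddBelow _) n, z n, hz n, rfl⟩

/-- Let `R` be a regular local ring containing a field of characteristic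
zero, and let `ν` be a rank 1 valuation of the quotient field of `R` which is nonnegative
on `R` (we use the equivalent multiplicative formulation with a valuation `v` taking
values in `ℝ≥0`, so that `ν = -log v`; `ν` nonnegative means `v ≤ 1`, and additive values
increasing to `∞` means multiplicative values decreasing to `0`).  If `z₁, z₂, …` is an
infinite sequence of elements of `R` with strictly increasing values `ν(zₙ)`, then
`ν(zₙ) → ∞`; equivalently, for every `ρ` only finitely many values assumed by `ν` on
`R \ {0}` are `≤ ρ`. -/
theorem stmt_1 (R : Type*) [CommRing R] [IsLocalRing R] [IsDomain R] [IsNoetherianRing R]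
    (k : Type*) [Field k] [CharZero k] [Algebra k R]
    (hreg : ∃ s : Finset R, Ideal.span (s : Set R) = IsLocalRing.maximalIdeal R ∧
      (s.card : WithBot ℕ∞) = ringKrullDim R)
    (v : Valuation (FractionRing R) ℝ≥0)
    (hrank1 : ∃ x : FractionRing R, v x ≠ 0 ∧ v x ≠ 1)
    (hnonneg : ∀ r : R, v (algebraMap R (FractionRing R) r) ≤ 1) :
    (∀ z : ℕ → R, (∀ n, z n ≠ 0) →
        StrictAnti (fun n => v (algebraMap R (FractionRing R) (z n))) →
        Tendsto (fun n => v (algebraMap R (FractionRing R) (z n))) atTop (nhds 0)) ∧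
      ∀ ρ : ℝ≥0, 0 < ρ →
        {c : ℝ≥0 | ρ ≤ c ∧ ∃ z : R, z ≠ 0 ∧ v (algebraMap R (FractionRing R) z) = c}.Finite :=
  stmt_1_general R v hnonneg
end

section
/- Let τ₁,…,τ_s be positive rationally independent real numbers and define for each h ≥ 1 the numbers τᵢ(h) by Perron's algorithm: τ₁(h−1) = τ_s(h), τⱼ(h−1) = τ_{j−1}(h) + aⱼ(h−1)τ_s(h) for 2 ≤ j ≤ s, where aⱼ(h−1) = ⌊τⱼ(h)/τ₁(h)⌋ (with suitable indexing so all τᵢ(h) are positive and rationally independent). Let Aᵢ(h) be the nonnegative integers with τᵢ = Aᵢ(h)τ₁(h) + Aᵢ(h+1)τ₂(h) + ⋯ + Aᵢ(h+s−1)τ_s(h). Then det(Aᵢ(h+j−1))_{1≤i,j≤s} = (−1)^{h(s−1)}. -/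
/-!
One step of Perron's algorithm is the integer change of basis `τ(h) = T(h) τ(h+1)`, and `T(h)`
is a permutation matrix (of a cyclic shift) perturbed in its last column, so `det T(h) = (-1)^(s-1)`.
The matrix `M(h) = (Aᵢ(h+j-1))` expresses `τ(0)` in the basis `τ(h)`, and the components of
`τ(h)` stay linearly independent over `ℚ`, so integer coordinates with respect to them are unique.
Hence `M(0) = 1` and `M(h+1) = M(h) T(h)`, and the determinant follows by induction.
-/

open Matrix

theorem LinearIndependent.of_span_le_span {K V ι : Type*} [DivisionRing K] [AddCommGroup V]
    [Module K V] [Fintype ι] {v w : ι → V} (hv : LinearIndependent K v)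
    (hvw : Submodule.span K (Set.range v) ≤ Submodule.span K (Set.range w)) :
    LinearIndependent K w := by
  have := FiniteDimensional.span_of_finite K (Set.finite_range w)
  rw [linearIndependent_iff_card_le_finrank_span] at hv ⊢
  exact hv.trans (Submodule.finrank_mono hvw)

section IntegerMatrices

variable {K ι : Type*} [Field K] [CharZero K] [Fintype ι]

theorem LinearIndependent.of_eq_intCast_mulVec {v w : ι → K} (hv : LinearIndependent ℚ v)
    (M : Matrix ι ι ℤ) (hvw : v = M.map (Int.castRingHom K) *ᵥ w) : LinearIndependent ℚ w := by
  refine hv.of_span_le_span (Submodule.span_le.mpr ?_)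
  rintro _ ⟨i, rfl⟩
  rw [hvw]
  show ∑ j, (M i j : K) * w j ∈ Submodule.span ℚ (Set.range w)
  refine Submodule.sum_mem _ fun j _ => ?_
  rw [← zsmul_eq_mul]
  exact Submodule.smul_of_tower_mem _ _ (Submodule.subset_span ⟨j, rfl⟩)

theorem Matrix.eq_of_intCast_mulVec_eq {m : Type*} {v : ι → K} (hv : LinearIndependent ℚ v)
    {M N : Matrix m ι ℤ} (h : M.map (Int.castRingHom K) *ᵥ v = N.map (Int.castRingHom K) *ᵥ v) :
    M = N := by
  ext i j
  have hrow : ∑ k, (M i k - N i k) • v k = 0 := by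
    simpa [mulVec, dotProduct, sub_smul, Finset.sum_sub_distrib, zsmul_eq_mul, sub_eq_zero]
      using congrFun h i
  exact sub_eq_zero.mp (Fintype.linearIndependent_iff.mp (hv.restrict_scalars' ℤ) _ hrow j)

end IntegerMatrices

section PerronStepMatrix

variable {R S : Type*} [CommRing R] [CommRing S] {n : ℕ}

/-- With `aₖ = ⌊τₖ₊₁(h) / τ₀(h)⌋` (0-indexed), one step of Perron's algorithm reads
`τ(h) = perronStepMatrix a *ᵥ τ(h+1)`. -/
def perronStepMatrix (a : Fin n → R) : Matrix (Fin (n + 1)) (Fin (n + 1)) R :=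
  of <| vecCons (Pi.single (Fin.last n) 1) fun k =>
    Pi.single k.castSucc 1 + a k • Pi.single (Fin.last n) 1

theorem perronStepMatrix_map (f : R →+* S) (a : Fin n → R) :
    (perronStepMatrix a).map f = perronStepMatrix (f ∘ a) := by
  ext i j
  cases i using Fin.cases <;> simp [perronStepMatrix, Pi.single_apply, apply_ite f]

theorem perronStepMatrix_mulVec_zero (a : Fin n → R) (x : Fin (n + 1) → R) :
    (perronStepMatrix a *ᵥ x) 0 = x (Fin.last n) := by
  simp [perronStepMatrix, mulVec]

theorem perronStepMatrix_mulVec_succ (a : Fin n → R) (x : Fin (n + 1) → R) (k : Fin n) :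
    (perronStepMatrix a *ᵥ x) k.succ = x k.castSucc + a k * x (Fin.last n) := by
  simp [perronStepMatrix, mulVec, dotProduct, add_mul, Finset.sum_add_distrib, Pi.single_apply]

theorem det_perronStepMatrix (a : Fin n → R) : (perronStepMatrix a).det = (-1) ^ n := by
  rw [det_succ_row_zero, Finset.sum_eq_single (Fin.last n)]
  · have hminor : (perronStepMatrix a).submatrix Fin.succ (Fin.last n).succAbove = 1 := by
      ext i j
      simp [perronStepMatrix, Fin.succAbove_last, Pi.single_apply, one_apply, eq_comm,
        Fin.castSucc_ne_last]
    rw [hminor, det_one]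
    simp [perronStepMatrix]
  · intro j _ hj
    simp [perronStepMatrix, hj]
  · simp

end PerronStepMatrix

theorem stmt_7_general (s : ℕ) (hs : 0 < s)
    (τ : ℕ → Fin s → ℝ) (A : ℕ → Fin s → ℕ)
    (hind : LinearIndependent ℚ (τ 0))
    (hrec1 : ∀ h : ℕ, τ (h + 1) ⟨s - 1, Nat.sub_lt hs Nat.one_pos⟩ = τ h ⟨0, hs⟩)
    (hrec2 : ∀ h : ℕ, ∀ i : Fin s, 0 < (i : ℕ) →
      τ h i = τ (h + 1) ⟨(i : ℕ) - 1, Nat.lt_of_le_of_lt (Nat.sub_le _ _) i.isLt⟩ +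
        (⌊τ h i / τ h ⟨0, hs⟩⌋ : ℝ) * τ h ⟨0, hs⟩)
    (hA : ∀ (h : ℕ) (i : Fin s), τ 0 i = ∑ j : Fin s, (A (h + (j : ℕ)) i : ℝ) * τ h j) :
    ∀ h : ℕ, (Matrix.det fun i j : Fin s => (A (h + (j : ℕ)) i : ℤ)) =
      (-1) ^ (h * (s - 1)) := by
  obtain ⟨n, rfl⟩ : ∃ n, s = n + 1 := ⟨s - 1, (Nat.succ_pred_eq_of_pos hs).symm⟩
  have hlast : ∀ h, τ (h + 1) (Fin.last n) = τ h 0 := hrec1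
  have hsucc : ∀ h (k : Fin n),
      τ h k.succ = τ (h + 1) k.castSucc + ⌊τ h k.succ / τ h 0⌋ * τ h 0 :=
    fun h k => hrec2 h k.succ k.succ_pos
  set M : ℕ → Matrix (Fin (n + 1)) (Fin (n + 1)) ℤ := fun h => of fun i j => A (h + j) i
  set T : ℕ → Matrix (Fin (n + 1)) (Fin (n + 1)) ℤ :=
    fun h => perronStepMatrix fun k => ⌊τ h k.succ / τ h 0⌋
  have hM : ∀ h, τ 0 = (M h).map (Int.castRingHom ℝ) *ᵥ τ h := fun h =>
    funext fun i => by simp [M, hA h i, mulVec, dotProduct]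
  have hT : ∀ h, τ h = (T h).map (Int.castRingHom ℝ) *ᵥ τ (h + 1) := by
    intro h
    funext i
    cases i using Fin.cases with
    | zero => rw [perronStepMatrix_map, perronStepMatrix_mulVec_zero, hlast]
    | succ k =>
      rw [perronStepMatrix_map, perronStepMatrix_mulVec_succ, hlast]
      exact hsucc h k
  have hM0 : M 0 = 1 := eq_of_intCast_mulVec_eq hind (by rw [← hM 0]; simp)
  have hMsucc : ∀ h, M (h + 1) = M h * T h := fun h =>
    eq_of_intCast_mulVec_eq (hind.of_eq_intCast_mulVec (M (h + 1)) (hM (h + 1))) <| by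
      rw [Matrix.map_mul, ← mulVec_mulVec, ← hT, ← hM, ← hM]
  intro h
  show (M h).det = _
  induction h with
  | zero => simp [hM0]
  | succ h ih =>
    rw [hMsucc, det_mul, ih, det_perronStepMatrix, Nat.add_sub_cancel, add_one_mul, pow_add]

/-- Let `τ₁,…,τ_s` be positive rationally independent reals and run
Perron's algorithm: at each stage `h` the vector `τ(h)` of positive reals satisfies
`τ₁(h) = τ_s(h+1)` and `τⱼ(h) = τ_{j-1}(h+1) + ⌊τⱼ(h)/τ₁(h)⌋·τ₁(h)` for `2 ≤ j ≤ s`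
(written here 0-indexed).  Let `Aᵢ(h)` be the nonnegative integers with
`τᵢ = Aᵢ(h)τ₁(h) + Aᵢ(h+1)τ₂(h) + ⋯ + Aᵢ(h+s-1)τ_s(h)`.  Then
`det (Aᵢ(h+j-1))_{1≤i,j≤s} = (-1)^{h(s-1)}`. -/
theorem stmt_7 (s : ℕ) (hs : 0 < s)
    (τ : ℕ → Fin s → ℝ) (A : ℕ → Fin s → ℕ)
    (hpos : ∀ h i, 0 < τ h i)
    (hind : LinearIndependent ℚ (τ 0))
    (hrec1 : ∀ h : ℕ, τ (h + 1) ⟨s - 1, Nat.sub_lt hs Nat.one_pos⟩ = τ h ⟨0, hs⟩)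
    (hrec2 : ∀ h : ℕ, ∀ i : Fin s, 0 < (i : ℕ) →
      τ h i = τ (h + 1) ⟨(i : ℕ) - 1, Nat.lt_of_le_of_lt (Nat.sub_le _ _) i.isLt⟩ +
        (⌊τ h i / τ h ⟨0, hs⟩⌋ : ℝ) * τ h ⟨0, hs⟩)
    (hA : ∀ (h : ℕ) (i : Fin s), τ 0 i = ∑ j : Fin s, (A (h + (j : ℕ)) i : ℝ) * τ h j) :
    ∀ h : ℕ, (Matrix.det fun i j : Fin s => (A (h + (j : ℕ)) i : ℤ)) =
      (-1) ^ (h * (s - 1)) :=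
  stmt_7_general s hs τ A hind hrec1 hrec2 hA
end

section
/- With the notation of Perron's algorithm applied to positive rationally independent reals τ₁,…,τ_s, the ratios Aᵢ(h)/A₁(h) converge to τᵢ/τ₁ as h → ∞. Consequently, if d₁¹,…,d_s¹ and d₁²,…,d_s² are nonnegative integers with d₁¹τ₁+⋯+d_s¹τ_s < d₁²τ₁+⋯+d_s²τ_s, then for h sufficiently large, d₁²A₁(h+j−1)+⋯+d_s²A_s(h+j−1) > d₁¹A₁(h+j−1)+⋯+d_s¹A_s(h+j−1) for all 1 ≤ j ≤ s. -/
open Filter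

lemma conv_aux (s N : ℕ) (hs2 : 2 ≤ s) (r : ℕ → ℝ) (ρ : ℝ)
    (H1a : ∀ h, N ≤ h → ∃ j, j < s ∧ r (h + j) ≤ ρ)
    (H1b : ∀ h, N ≤ h → ∃ j, j < s ∧ ρ ≤ r (h + j))
    (H2 : ∀ n, N + s ≤ n → ∀ U : ℝ, (∀ k, n - s ≤ k → k < n → r k ≤ U) →
          U - r (n-1) ≤ (s : ℝ) * (U - r n))
    (H3 : ∀ n, N + s ≤ n → ∀ u : ℝ, (∀ k, n - s ≤ k → k < n → u ≤ r k) →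
          r (n-1) - u ≤ (s : ℝ) * (r n - u)) :
    Tendsto r atTop (nhds ρ) := by
  have hs0 : 0 < s := by omega
  have hsne : (Finset.range s).Nonempty := Finset.nonempty_range_iff.mpr (by omega)
  set M : ℕ → ℝ := fun h => (Finset.range s).sup' hsne (fun j => r (h + j)) with hMdef
  set m : ℕ → ℝ := fun h => (Finset.range s).inf' hsne (fun j => r (h + j)) with hmdef
  have hrM : ∀ h j, j < s → r (h + j) ≤ M h := fun h j hj =>
    Finset.le_sup' (fun j => r (h + j)) (Finset.mem_range.mpr hj)
  have hmr : ∀ h j, j < s → m h ≤ r (h + j) := fun h j hj =>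
    Finset.inf'_le (fun j => r (h + j)) (Finset.mem_range.mpr hj)
  have hρM : ∀ h, N ≤ h → ρ ≤ M h := by
    intro h hh
    obtain ⟨j, hj, hle⟩ := H1b h hh
    exact hle.trans (hrM h j hj)
  have hmρ : ∀ h, N ≤ h → m h ≤ ρ := by
    intro h hh
    obtain ⟨j, hj, hle⟩ := H1a h hh
    exact (hmr h j hj).trans hle
  -- window bounds for H2/H3 at n with window base n - s
  have hwinU : ∀ n, N + s ≤ n → ∀ k, n - s ≤ k → k < n → r k ≤ M (n - s) := by
    intro n hn k hk1 hk2
    have : k = (n - s) + (k - (n - s)) := by omega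
    rw [this]
    exact hrM _ _ (by omega)
  have hwinL : ∀ n, N + s ≤ n → ∀ k, n - s ≤ k → k < n → m (n - s) ≤ r k := by
    intro n hn k hk1 hk2
    have : k = (n - s) + (k - (n - s)) := by omega
    rw [this]
    exact hmr _ _ (by omega)
  have hnew_le : ∀ h, N ≤ h → r (h + s) ≤ M h := by
    intro h hh
    have h2 := H2 (h + s) (by omega) (M h) (by
      intro k hk1 hk2
      have : k = h + (k - h) := by omega
      rw [this]; exact hrM _ _ (by omega))
    have hb : h + s - 1 = h + (s - 1) := by omega
    have : r (h + s - 1) ≤ M h := by rw [hb]; exact hrM _ _ (by omega)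
    nlinarith [(Nat.cast_pos.mpr hs0 : (0:ℝ) < s)]
  have hnew_ge : ∀ h, N ≤ h → m h ≤ r (h + s) := by
    intro h hh
    have h3 := H3 (h + s) (by omega) (m h) (by
      intro k hk1 hk2
      have : k = h + (k - h) := by omega
      rw [this]; exact hmr _ _ (by omega))
    have hb : h + s - 1 = h + (s - 1) := by omega
    have : m h ≤ r (h + s - 1) := by rw [hb]; exact hmr _ _ (by omega)
    nlinarith [(Nat.cast_pos.mpr hs0 : (0:ℝ) < s)]
  have hMstep : ∀ h, N ≤ h → M (h + 1) ≤ M h := by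
    intro h hh
    apply Finset.sup'_le
    intro j hj
    rcases Nat.lt_or_ge (j + 1) s with hj' | hj'
    · have : h + 1 + j = h + (j + 1) := by omega
      rw [this]; exact hrM _ _ hj'
    · have hjs : j = s - 1 := by simp [Finset.mem_range] at hj; omega
      have : h + 1 + j = h + s := by omega
      rw [this]; exact hnew_le h hh
  have hmstep : ∀ h, N ≤ h → m h ≤ m (h + 1) := by
    intro h hh
    apply Finset.le_inf'
    intro j hj
    rcases Nat.lt_or_ge (j + 1) s with hj' | hj'
    · have : h + 1 + j = h + (j + 1) := by omega
      rw [this]; exact hmr _ _ hj'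
    · have hjs : j = s - 1 := by simp [Finset.mem_range] at hj; omega
      have : h + 1 + j = h + s := by omega
      rw [this]; exact hnew_ge h hh
  have hManti : ∀ a b, N ≤ a → a ≤ b → M b ≤ M a := by
    intro a b ha hab
    induction b with
    | zero => have : a = 0 := by omega
              simp [this]
    | succ b ih =>
      rcases Nat.lt_or_ge a (b + 1) with h' | h'
      · exact (hMstep b (by omega)).trans (ih (by omega))
      · have : a = b + 1 := by omega
        simp [this]
  have hmmono : ∀ a b, N ≤ a → a ≤ b → m a ≤ m b := by
    intro a b ha hab
    induction b with
    | zero => have : a = 0 := by omega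
              simp [this]
    | succ b ih =>
      rcases Nat.lt_or_ge a (b + 1) with h' | h'
      · exact (ih (by omega)).trans (hmstep b (by omega))
      · have : a = b + 1 := by omega
        simp [this]
  set M' : ℕ → ℝ := fun k => M (N + k) with hM'def
  set m' : ℕ → ℝ := fun k => m (N + k) with hm'def
  have hM'anti : Antitone M' := antitone_nat_of_succ_le fun n => by
    exact hManti (N + n) (N + (n + 1)) (by omega) (by omega)
  have hm'mono : Monotone m' := monotone_nat_of_le_succ fun n => by
    exact hmmono (N + n) (N + (n + 1)) (by omega) (by omega)
  have hbddM : BddBelow (Set.range M') := by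
    refine ⟨ρ, ?_⟩
    rintro x ⟨k, rfl⟩
    exact hρM _ (by omega)
  have hbddm : BddAbove (Set.range m') := by
    refine ⟨ρ, ?_⟩
    rintro x ⟨k, rfl⟩
    exact hmρ _ (by omega)
  set Ms := ⨅ k, M' k with hMsdef
  set ms := ⨆ k, m' k with hmsdef
  have hMstend : Tendsto M' atTop (nhds Ms) := tendsto_atTop_ciInf hM'anti hbddM
  have hmstend : Tendsto m' atTop (nhds ms) := tendsto_atTop_ciSup hm'mono hbddm
  have hρMs : ρ ≤ Ms := le_ciInf fun k => hρM _ (by omega)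
  have hmsρ : ms ≤ ρ := ciSup_le fun k => hmρ _ (by omega)
  have hMsle : ∀ h, N ≤ h → Ms ≤ M h := by
    intro h hh
    have := ciInf_le hbddM (h - N)
    have he : N + (h - N) = h := by omega
    simpa [hM'def, he] using this
  have hlems : ∀ h, N ≤ h → m h ≤ ms := by
    intro h hh
    have := le_ciSup hbddm (h - N)
    have he : N + (h - N) = h := by omega
    simpa [hm'def, he] using this
  have key : Ms ≤ ms := by
    by_contra hlt
    push_neg at hlt
    set δ := Ms - ms with hδdef
    have hδpos : 0 < δ := by simp [hδdef]; linarith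
    set P : ℝ := ((s : ℝ) + 1) ^ s with hPdef
    have hP1 : (1 : ℝ) ≤ P := one_le_pow₀ (by have := Nat.cast_nonneg (α := ℝ) s; linarith)
    have hPpos : 0 < P := by linarith
    set ε := δ / (2 * P) with hεdef
    have hεpos : 0 < ε := div_pos hδpos (by linarith)
    have hPε : P * (2 * ε) = δ := by
      rw [hεdef]; field_simp
    obtain ⟨K1, hK1⟩ : ∃ K, M' K < Ms + ε := by
      by_contra hc; push_neg at hc
      have := le_ciInf hc
      rw [← hMsdef] at this
      linarith
    obtain ⟨K2, hK2⟩ : ∃ K, ms - ε < m' K := by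
      by_contra hc; push_neg at hc
      have := ciSup_le hc
      rw [← hmsdef] at this
      linarith
    set H' := N + max K1 K2 with hH'def
    have hMub : ∀ h, H' ≤ h → M h < Ms + ε := by
      intro h hh
      calc M h ≤ M (N + K1) := hManti _ _ (by omega) (by omega)
        _ < Ms + ε := hK1
    have hmlb : ∀ h, H' ≤ h → ms - ε < m h := by
      intro h hh
      calc ms - ε < m (N + K2) := hK2
        _ ≤ m h := hmmono _ _ (by omega) (by omega)
    set h0 := H' + s with hh0def
    obtain ⟨jq, hjq, hq⟩ := Finset.exists_mem_eq_sup' hsne (fun j => r (h0 + j))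
    obtain ⟨jp, hjp, hp⟩ := Finset.exists_mem_eq_inf' hsne (fun j => r (h0 + j))
    simp only [Finset.mem_range] at hjq hjp
    set q := h0 + jq with hqdef
    set p := h0 + jp with hpdef
    have hrq : r q = M h0 := hq.symm
    have hrp : r p = m h0 := hp.symm
    have hrqMs : Ms ≤ r q := by rw [hrq]; exact hMsle h0 (by omega)
    have hrpms : r p ≤ ms := by rw [hrp]; exact hlems h0 (by omega)
    rcases le_or_gt p q with hpq | hqp
    · -- upper chain from q back to p
      have chain : ∀ k, k ≤ q - p → Ms + ε - r (q - k) ≤ ((s : ℝ) + 1) ^ k * (2 * ε) := by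
        intro k hk
        induction k with
        | zero => simp; linarith
        | succ k ih =>
          have ihk := ih (by omega)
          set n := q - k with hndef
          have hnp : p < n := by omega
          have hnN : N + s ≤ n := by omega
          have hstep := H2 n hnN (M (n - s)) (hwinU n hnN)
          have hMn1 : M (n - s) < Ms + ε := hMub _ (by omega)
          have hMn2 : Ms ≤ M (n - s) := hMsle _ (by omega)
          have he1 : q - (k + 1) = n - 1 := by omega
          rw [he1]
          have hmul : (s : ℝ) * (M (n - s) - r n) ≤ (s : ℝ) * (((s:ℝ)+1)^k * (2*ε)) :=
            mul_le_mul_of_nonneg_left (by linarith) (by positivity)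
          have hpow1 : (1 : ℝ) ≤ ((s:ℝ)+1)^k := one_le_pow₀ (by have := Nat.cast_nonneg (α := ℝ) s; linarith)
          have hε2 : ε ≤ ((s:ℝ)+1)^k * (2*ε) := by
            have h2 := mul_le_mul_of_nonneg_right hpow1 (by linarith : (0:ℝ) ≤ 2*ε)
            linarith [h2]
          have hr : ((s:ℝ)+1)^(k+1) * (2*ε) = (s:ℝ) * (((s:ℝ)+1)^k * (2*ε)) + ((s:ℝ)+1)^k * (2*ε) := by
            ring
          linarith
      have hfin := chain (q - p) le_rfl
      have he : q - (q - p) = p := by omega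
      rw [he] at hfin
      have hpow : ((s:ℝ)+1)^(q - p) ≤ P := by
        rw [hPdef]
        exact pow_le_pow_right₀ (by have := Nat.cast_nonneg (α := ℝ) s; linarith) (by omega)
      have : ((s:ℝ)+1)^(q-p) * (2*ε) ≤ P * (2*ε) := by
        apply mul_le_mul_of_nonneg_right hpow (by linarith)
      rw [hPε] at this
      have : Ms + ε - r p ≤ δ := le_trans hfin this
      simp [hδdef] at this
      linarith
    · -- lower chain from p back to q
      have chain : ∀ k, k ≤ p - q → r (p - k) - (ms - ε) ≤ ((s : ℝ) + 1) ^ k * (2 * ε) := by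
        intro k hk
        induction k with
        | zero => simp; linarith
        | succ k ih =>
          have ihk := ih (by omega)
          set n := p - k with hndef
          have hnq : q < n := by omega
          have hnN : N + s ≤ n := by omega
          have hstep := H3 n hnN (m (n - s)) (hwinL n hnN)
          have hmn1 : ms - ε < m (n - s) := hmlb _ (by omega)
          have hmn2 : m (n - s) ≤ ms := hlems _ (by omega)
          have he1 : p - (k + 1) = n - 1 := by omega
          rw [he1]
          have hmul : (s : ℝ) * (r n - m (n - s)) ≤ (s : ℝ) * (((s:ℝ)+1)^k * (2*ε)) :=
            mul_le_mul_of_nonneg_left (by linarith) (by positivity)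
          have hpow1 : (1 : ℝ) ≤ ((s:ℝ)+1)^k := one_le_pow₀ (by have := Nat.cast_nonneg (α := ℝ) s; linarith)
          have hε2 : ε ≤ ((s:ℝ)+1)^k * (2*ε) := by
            have h2 := mul_le_mul_of_nonneg_right hpow1 (by linarith : (0:ℝ) ≤ 2*ε)
            linarith [h2]
          have hr : ((s:ℝ)+1)^(k+1) * (2*ε) = (s:ℝ) * (((s:ℝ)+1)^k * (2*ε)) + ((s:ℝ)+1)^k * (2*ε) := by
            ring
          linarith
      have hfin := chain (p - q) le_rfl
      have he : p - (p - q) = q := by omega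
      rw [he] at hfin
      have hpow : ((s:ℝ)+1)^(p - q) ≤ P := by
        rw [hPdef]
        exact pow_le_pow_right₀ (by have := Nat.cast_nonneg (α := ℝ) s; linarith) (by omega)
      have : ((s:ℝ)+1)^(p-q) * (2*ε) ≤ P * (2*ε) := by
        apply mul_le_mul_of_nonneg_right hpow (by linarith)
      rw [hPε] at this
      have : r q - (ms - ε) ≤ δ := le_trans hfin this
      simp [hδdef] at this
      linarith
  have hMsρ : Ms = ρ := le_antisymm (by linarith) hρMs
  have hmsρ' : ms = ρ := le_antisymm hmsρ (by linarith)
  rw [hMsρ] at hMstend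
  rw [hmsρ'] at hmstend
  have hsq : Tendsto (fun k => r (N + k)) atTop (nhds ρ) := by
    apply tendsto_of_tendsto_of_tendsto_of_le_of_le hmstend hMstend
    · intro k
      have := hmr (N + k) 0 hs0
      simpa using this
    · intro k
      have := hrM (N + k) 0 hs0
      simpa using this
  have : (fun k => r (N + k)) = fun k => r (k + N) := by
    funext k; rw [Nat.add_comm]
  rw [this] at hsq
  exact (Filter.tendsto_add_atTop_iff_nat N).mp hsq

/-- With the notation of Perron's algorithm applied to positive
rationally independent reals `τ₁,…,τ_s` (see Statement 7), the ratios `Aᵢ(h)/A₁(h)`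
converge to `τᵢ/τ₁` as `h → ∞`.  Consequently, if `d¹, d²` are vectors of nonnegative
integers with `Σ dᵢ¹τᵢ < Σ dᵢ²τᵢ`, then for `h` sufficiently large,
`Σᵢ dᵢ²Aᵢ(h+j-1) > Σᵢ dᵢ¹Aᵢ(h+j-1)` for all `1 ≤ j ≤ s`. -/
theorem stmt_8 (s : ℕ) (hs : 0 < s)
    (τ : ℕ → Fin s → ℝ) (A : ℕ → Fin s → ℕ)
    (hpos : ∀ h i, 0 < τ h i)
    (hind : LinearIndependent ℚ (τ 0))
    (hrec1 : ∀ h : ℕ, τ (h + 1) ⟨s - 1, Nat.sub_lt hs Nat.one_pos⟩ = τ h ⟨0, hs⟩)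
    (hrec2 : ∀ h : ℕ, ∀ i : Fin s, 0 < (i : ℕ) →
      τ h i = τ (h + 1) ⟨(i : ℕ) - 1, Nat.lt_of_le_of_lt (Nat.sub_le _ _) i.isLt⟩ +
        (⌊τ h i / τ h ⟨0, hs⟩⌋ : ℝ) * τ h ⟨0, hs⟩)
    (hA : ∀ (h : ℕ) (i : Fin s), τ 0 i = ∑ j : Fin s, (A (h + (j : ℕ)) i : ℝ) * τ h j) :
    (∀ i : Fin s,
      Tendsto (fun h : ℕ => (A h i : ℝ) / (A h ⟨0, hs⟩ : ℝ)) atTop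
        (nhds (τ 0 i / τ 0 ⟨0, hs⟩))) ∧
    ∀ d1 d2 : Fin s → ℕ,
      (∑ i, (d1 i : ℝ) * τ 0 i) < (∑ i, (d2 i : ℝ) * τ 0 i) →
      ∃ H : ℕ, ∀ h ≥ H, ∀ j : Fin s,
        (∑ i, d1 i * A (h + (j : ℕ)) i) < ∑ i, d2 i * A (h + (j : ℕ)) i := by
  rcases Nat.lt_or_ge s 2 with hs1 | hs2
  · -- case s = 1
    have hs1' : s = 1 := by omega
    subst hs1'
    have hone : ∀ (i : Fin 1), i = ⟨0, hs⟩ := fun i => Subsingleton.elim _ _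
    have hA1 : ∀ (h : ℕ) (i : Fin 1), (A h i : ℝ) = 1 := by
      intro h i
      have := hA h i
      rw [Fin.sum_univ_one] at this
      have h0 : ((0 : Fin 1) : ℕ) = 0 := rfl
      rw [h0, Nat.add_zero] at this
      have hτh : τ h (0 : Fin 1) = τ 0 i := by
        rw [hone i]
        clear this
        induction h with
        | zero => rw [hone (0 : Fin 1)]
        | succ h ih =>
          have := hrec1 h
          rw [hone (⟨1 - 1, Nat.sub_lt hs Nat.one_pos⟩ : Fin 1), hone (⟨0, hs⟩ : Fin 1)] at this
          rw [← hone (0 : Fin 1)] at this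
          rw [this, ih]
      rw [hτh] at this
      have hτp : 0 < τ 0 i := hpos 0 i
      have : ((A h i : ℝ) - 1) * τ 0 i = 0 := by linarith
      rcases mul_eq_zero.mp this with h' | h'
      · linarith
      · linarith
    constructor
    · intro i
      have : (fun h : ℕ => (A h i : ℝ) / (A h ⟨0, hs⟩ : ℝ)) = fun _ : ℕ => (1 : ℝ) := by
        funext h; rw [hA1 h i, hA1 h ⟨0, hs⟩]; norm_num
      rw [this]
      have hτp : 0 < τ 0 (⟨0, hs⟩ : Fin 1) := hpos 0 _
      have : τ 0 i / τ 0 (⟨0, hs⟩ : Fin 1) = 1 := by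
        rw [hone i]; exact div_self (ne_of_gt hτp)
      rw [this]
      exact tendsto_const_nhds
    · intro d1 d2 hd
      rw [Fin.sum_univ_one, Fin.sum_univ_one] at hd
      have hτp : 0 < τ 0 (0 : Fin 1) := hpos 0 _
      have hdlt : d1 (0 : Fin 1) < d2 (0 : Fin 1) := by
        by_contra hc
        push_neg at hc
        have : (d2 (0 : Fin 1) : ℝ) ≤ (d1 (0 : Fin 1) : ℝ) := by exact_mod_cast hc
        nlinarith
      refine ⟨0, fun h _ j => ?_⟩
      rw [Fin.sum_univ_one, Fin.sum_univ_one]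
      have hAv : A (h + (j : ℕ)) (0 : Fin 1) = 1 := by
        have := hA1 (h + (j : ℕ)) (0 : Fin 1)
        exact_mod_cast this
      rw [hAv]
      simpa using hdlt
  · -- case s ≥ 2
    set z : Fin s := ⟨0, hs⟩ with hzdef
    set l : Fin s := ⟨s - 1, Nat.sub_lt hs Nat.one_pos⟩ with hldef
    have hzval : (z : ℕ) = 0 := rfl
    have hlval : (l : ℕ) = s - 1 := rfl
    have hlz : l ≠ z := by
      intro h
      have := congrArg (fun x : Fin s => (x : ℕ)) h
      simp [hzval, hlval] at this
      omega
    -- ===== the recurrence =====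
    have hrec : ∀ (h : ℕ) (i : Fin s), (A (h + s) i : ℝ) =
        (A h i : ℝ) + ∑ k ∈ Finset.univ.erase z,
          (⌊τ h k / τ h z⌋ : ℝ) * (A (h + (k : ℕ)) i : ℝ) := by
      intro h i
      have e1 := hA h i
      have e2 := hA (h + 1) i
      rw [← Finset.add_sum_erase _ _ (Finset.mem_univ z)] at e1
      rw [← Finset.add_sum_erase _ _ (Finset.mem_univ l)] at e2
      rw [show h + (z : ℕ) = h from rfl] at e1
      rw [show h + 1 + (l : ℕ) = h + s from by rw [hlval]; omega] at e2
      rw [hrec1 h] at e2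
      -- expand the erase-z sum in e1
      have e1' : ∑ j ∈ Finset.univ.erase z, (A (h + (j : ℕ)) i : ℝ) * τ h j
          = ∑ j ∈ Finset.univ.erase z,
              ((A (h + (j : ℕ)) i : ℝ) *
                τ (h+1) ⟨(j : ℕ) - 1, Nat.lt_of_le_of_lt (Nat.sub_le _ _) j.isLt⟩
              + (⌊τ h j / τ h z⌋ : ℝ) * (A (h + (j : ℕ)) i : ℝ) * τ h z) := by
        refine Finset.sum_congr rfl fun j hj => ?_
        have hj0 : 0 < (j : ℕ) := by
          rcases Finset.mem_erase.mp hj with ⟨hne, -⟩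
          rcases Nat.eq_zero_or_pos (j : ℕ) with h' | h'
          · exact absurd (Fin.ext h' : j = z) hne
          · exact h'
        linear_combination ((A (h + (j:ℕ)) i : ℝ)) * (hrec2 h j hj0)
      rw [e1', Finset.sum_add_distrib, ← Finset.sum_mul] at e1
      -- reindex
      have ebij : ∑ j ∈ Finset.univ.erase z,
            (A (h + (j : ℕ)) i : ℝ) *
              τ (h+1) ⟨(j : ℕ) - 1, Nat.lt_of_le_of_lt (Nat.sub_le _ _) j.isLt⟩
          = ∑ j ∈ Finset.univ.erase l, (A (h + 1 + (j : ℕ)) i : ℝ) * τ (h+1) j := by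
        refine Finset.sum_nbij'
          (fun (j : Fin s) => (⟨(j : ℕ) - 1, Nat.lt_of_le_of_lt (Nat.sub_le _ _) j.isLt⟩ : Fin s))
          (fun (j : Fin s) => (⟨min ((j : ℕ) + 1) (s - 1), by omega⟩ : Fin s))
          ?_ ?_ ?_ ?_ ?_
        · intro a ha
          rcases Finset.mem_erase.mp ha with ⟨hne, -⟩
          have ha0 : 0 < (a : ℕ) := by
            rcases Nat.eq_zero_or_pos (a : ℕ) with h' | h'
            · exact absurd (Fin.ext h' : a = z) hne
            · exact h'
          refine Finset.mem_erase.mpr ⟨?_, Finset.mem_univ _⟩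
          intro hc
          have := congrArg (fun x : Fin s => (x : ℕ)) hc
          simp only [hlval] at this
          have := a.isLt
          omega
        · intro a ha
          rcases Finset.mem_erase.mp ha with ⟨hne, -⟩
          have hal : (a : ℕ) < s - 1 := by
            have h1 := a.isLt
            rcases Nat.lt_or_ge (a : ℕ) (s - 1) with h' | h'
            · exact h'
            · exact absurd (Fin.ext (by omega) : a = l) hne
          refine Finset.mem_erase.mpr ⟨?_, Finset.mem_univ _⟩
          intro hc
          have := congrArg (fun x : Fin s => (x : ℕ)) hc
          simp only [hzval] at this
          omega
        · intro a ha
          rcases Finset.mem_erase.mp ha with ⟨hne, -⟩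
          have ha0 : 0 < (a : ℕ) := by
            rcases Nat.eq_zero_or_pos (a : ℕ) with h' | h'
            · exact absurd (Fin.ext h' : a = z) hne
            · exact h'
          have := a.isLt
          exact Fin.ext (by simp; omega)
        · intro a ha
          rcases Finset.mem_erase.mp ha with ⟨hne, -⟩
          have hal : (a : ℕ) < s - 1 := by
            have h1 := a.isLt
            rcases Nat.lt_or_ge (a : ℕ) (s - 1) with h' | h'
            · exact h'
            · exact absurd (Fin.ext (by omega) : a = l) hne
          exact Fin.ext (by simp; omega)
        · intro a ha
          rcases Finset.mem_erase.mp ha with ⟨hne, -⟩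
          have ha0 : 0 < (a : ℕ) := by
            rcases Nat.eq_zero_or_pos (a : ℕ) with h' | h'
            · exact absurd (Fin.ext h' : a = z) hne
            · exact h'
          have harw : h + (a : ℕ) = h + 1 + ((a : ℕ) - 1) := by omega
          rw [harw]
      rw [ebij] at e1
      -- now e1 : τ 0 i = A h i * τ h z + (S + (∑ b) * τ h z)
      -- e2 : τ 0 i = A (h+s) i * τ h z + S
      have hτz : (0:ℝ) < τ h z := hpos h z
      have hcanc : ((A h i : ℝ) + ∑ j ∈ Finset.univ.erase z,
          (⌊τ h j / τ h z⌋ : ℝ) * (A (h + (j : ℕ)) i : ℝ)) * τ h z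
          = (A (h + s) i : ℝ) * τ h z := by
        linarith [e1, e2]
      have := mul_right_cancel₀ (ne_of_gt hτz) hcanc
      linarith [this]
    -- ===== b facts =====
    have hbnn : ∀ (h : ℕ) (k : Fin s), (0:ℤ) ≤ ⌊τ h k / τ h z⌋ :=
      fun h k => Int.floor_nonneg.mpr (le_of_lt (div_pos (hpos h k) (hpos h z)))
    have hfrac : ∀ (h : ℕ) (m : Fin s), (m : ℕ) < s - 1 → τ (h+1) m < τ h z := by
      intro h m hm
      set j : Fin s := ⟨(m : ℕ) + 1, by omega⟩ with hjdef
      have hj0 : 0 < (j : ℕ) := by simp [hjdef]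
      have := hrec2 h j hj0
      have hjm : (⟨(j : ℕ) - 1, Nat.lt_of_le_of_lt (Nat.sub_le _ _) j.isLt⟩ : Fin s) = m := by
        apply Fin.ext; simp [hjdef]
      rw [hjm] at this
      have hfl := Int.sub_one_lt_floor (τ h j / τ h z)
      have hτz : (0:ℝ) < τ h z := hpos h z
      have h2 := mul_lt_mul_of_pos_right hfl hτz
      rw [sub_mul, div_mul_cancel₀ _ (ne_of_gt hτz)] at h2
      linarith
    have hτmax : ∀ (h : ℕ) (k : Fin s), τ (h+1) k ≤ τ (h+1) l := by
      intro h k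
      rcases eq_or_ne k l with rfl | hkl
      · exact le_refl _
      · have hk : (k : ℕ) < s - 1 := by
          have := k.isLt
          rcases Nat.lt_or_ge (k : ℕ) (s - 1) with h' | h'
          · exact h'
          · exact absurd (Fin.ext (by omega) : k = l) hkl
        have h1 := hfrac h k hk
        rw [← hrec1 h] at h1
        exact le_of_lt h1
    have hble : ∀ (h : ℕ) (k : Fin s), ⌊τ (h+1) k / τ (h+1) z⌋ ≤ ⌊τ (h+1) l / τ (h+1) z⌋ := by
      intro h k
      apply Int.floor_le_floor
      have := mul_le_mul_of_nonneg_right (hτmax h k) (le_of_lt (inv_pos.mpr (hpos (h+1) z)))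
      simpa [div_eq_mul_inv] using this
    have hb1 : ∀ (h : ℕ), (1:ℤ) ≤ ⌊τ (h+1) l / τ (h+1) z⌋ := by
      intro h
      apply Int.le_floor.mpr
      rw [le_div_iff₀ (hpos (h+1) z)]
      have h1 : τ (h+1) z < τ h z := by
        have := hfrac h z (by rw [hzval]; omega)
        exact this
      rw [hrec1 h]
      push_cast
      linarith
    have hble' : ∀ (h : ℕ), 1 ≤ h → ∀ k : Fin s, ⌊τ h k / τ h z⌋ ≤ ⌊τ h l / τ h z⌋ := by
      intro h hh k
      obtain ⟨h', rfl⟩ : ∃ h', h = h' + 1 := ⟨h - 1, by omega⟩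
      exact hble h' k
    have hb1' : ∀ (h : ℕ), 1 ≤ h → (1:ℤ) ≤ ⌊τ h l / τ h z⌋ := by
      intro h hh
      obtain ⟨h', rfl⟩ : ∃ h', h = h' + 1 := ⟨h - 1, by omega⟩
      exact hb1 h'
    -- ===== A facts =====
    have hAex : ∀ h : ℕ, ∃ j : Fin s, 0 < A (h + (j : ℕ)) z := by
      intro h
      by_contra hc
      push_neg at hc
      have hall : ∀ j : Fin s, A (h + (j : ℕ)) z = 0 := fun j => by
        have := hc j; omega
      have := hA h z
      rw [Finset.sum_eq_zero (fun j _ => by rw [hall j]; norm_num)] at this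
      exact absurd this (ne_of_gt (hpos 0 z))
    have hAstep : ∀ n : ℕ, s ≤ n → A n z ≤ A (n + 1) z := by
      intro n hn
      set h := n + 1 - s with hhdef
      have hh1 : 1 ≤ h := by omega
      have hhs : h + s = n + 1 := by omega
      have hr := hrec h z
      rw [hhs] at hr
      have hterm : (⌊τ h l / τ h z⌋ : ℝ) * (A (h + (l : ℕ)) z : ℝ)
          ≤ ∑ k ∈ Finset.univ.erase z, (⌊τ h k / τ h z⌋ : ℝ) * (A (h + (k : ℕ)) z : ℝ) := by
        apply Finset.single_le_sum (f := fun k => (⌊τ h k / τ h z⌋ : ℝ) * (A (h + (k : ℕ)) z : ℝ))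
        · intro k _
          apply mul_nonneg _ (Nat.cast_nonneg _)
          exact_mod_cast hbnn h k
        · exact Finset.mem_erase.mpr ⟨hlz, Finset.mem_univ _⟩
      have hbl : (1:ℝ) ≤ (⌊τ h l / τ h z⌋ : ℝ) := by exact_mod_cast hb1' h hh1
      have hln : h + (l : ℕ) = n := by rw [hlval]; omega
      rw [hln] at hterm
      have : (A n z : ℝ) ≤ (A (n+1) z : ℝ) := by
        have h1 : (A n z : ℝ) ≤ (⌊τ h l / τ h z⌋ : ℝ) * (A n z : ℝ) :=
          le_mul_of_one_le_left (Nat.cast_nonneg _) hbl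
        have h2 : (0:ℝ) ≤ (A h z : ℝ) := Nat.cast_nonneg _
        linarith
      exact_mod_cast this
    have hAmono : ∀ a b : ℕ, s ≤ a → a ≤ b → A a z ≤ A b z := by
      intro a b ha hab
      induction b with
      | zero => have : a = 0 := by omega
                rw [this]
      | succ b ih =>
        rcases Nat.lt_or_ge a (b + 1) with h' | h'
        · exact le_trans (ih (by omega)) (hAstep b (by omega))
        · have : a = b + 1 := by omega
          rw [this]
    have hApos : ∀ n : ℕ, 2 * s ≤ n → 0 < A n z := by
      intro n hn
      obtain ⟨j, hj⟩ := hAex s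
      have h1 := j.isLt
      have := hAmono (s + (j : ℕ)) n (by omega) (by omega)
      omega
    -- ===== convergence via conv_aux =====
    have hconv : ∀ i : Fin s,
        Tendsto (fun n : ℕ => (A n i : ℝ) / (A n z : ℝ)) atTop (nhds (τ 0 i / τ 0 z)) := by
      intro i
      apply conv_aux s (2 * s) hs2
      · -- H1a
        intro h hh
        by_contra hc
        push_neg at hc
        have hstrict : ∀ j : Fin s,
            (τ 0 i / τ 0 z) * ((A (h + (j:ℕ)) z : ℝ) * τ h j) < (A (h + (j:ℕ)) i : ℝ) * τ h j := by
          intro j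
          have hAz : (0:ℝ) < (A (h + (j:ℕ)) z : ℝ) := by
            exact_mod_cast hApos (h + (j:ℕ)) (by have := j.isLt; omega)
          have h2 := hc (j : ℕ) j.isLt
          rw [lt_div_iff₀ hAz] at h2
          have h3 := mul_lt_mul_of_pos_right h2 (hpos h j)
          calc (τ 0 i / τ 0 z) * ((A (h + (j:ℕ)) z : ℝ) * τ h j)
              = (τ 0 i / τ 0 z) * (A (h + (j:ℕ)) z : ℝ) * τ h j := by ring
            _ < (A (h + (j:ℕ)) i : ℝ) * τ h j := h3
        have hsum := Finset.sum_lt_sum_of_nonempty (⟨z, Finset.mem_univ z⟩ : (Finset.univ : Finset (Fin s)).Nonempty) (fun j _ => hstrict j)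
        rw [← Finset.mul_sum, ← hA h z, ← hA h i] at hsum
        rw [div_mul_cancel₀ _ (ne_of_gt (hpos 0 z))] at hsum
        exact lt_irrefl _ hsum
      · -- H1b
        intro h hh
        by_contra hc
        push_neg at hc
        have hstrict : ∀ j : Fin s,
            (A (h + (j:ℕ)) i : ℝ) * τ h j < (τ 0 i / τ 0 z) * ((A (h + (j:ℕ)) z : ℝ) * τ h j) := by
          intro j
          have hAz : (0:ℝ) < (A (h + (j:ℕ)) z : ℝ) := by
            exact_mod_cast hApos (h + (j:ℕ)) (by have := j.isLt; omega)
          have h2 := hc (j : ℕ) j.isLt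
          rw [div_lt_iff₀ hAz] at h2
          have h3 := mul_lt_mul_of_pos_right h2 (hpos h j)
          calc (A (h + (j:ℕ)) i : ℝ) * τ h j
              < (τ 0 i / τ 0 z) * (A (h + (j:ℕ)) z : ℝ) * τ h j := h3
            _ = (τ 0 i / τ 0 z) * ((A (h + (j:ℕ)) z : ℝ) * τ h j) := by ring
        have hsum := Finset.sum_lt_sum_of_nonempty (⟨z, Finset.mem_univ z⟩ : (Finset.univ : Finset (Fin s)).Nonempty) (fun j _ => hstrict j)
        rw [← Finset.mul_sum, ← hA h z, ← hA h i] at hsum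
        rw [div_mul_cancel₀ _ (ne_of_gt (hpos 0 z))] at hsum
        exact lt_irrefl _ hsum
      · -- H2
        intro n hn U hwin
        set h := n - s with hhdef
        have hh1 : 1 ≤ h := by omega
        have hhs : h + s = n := by omega
        have hri := hrec h i
        have hrz := hrec h z
        rw [hhs] at hri hrz
        set B : ℝ := (⌊τ h l / τ h z⌋ : ℝ) with hBdef
        have hB1 : (1:ℝ) ≤ B := by
          rw [hBdef]; exact_mod_cast hb1' h hh1
        have haz1 : (0:ℝ) < (A (n-1) z : ℝ) := by
          exact_mod_cast hApos (n-1) (by omega)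
        have hazn : (0:ℝ) < (A n z : ℝ) := by
          exact_mod_cast hApos n (by omega)
        have hwin' : ∀ k : Fin s, (A (h + (k:ℕ)) i : ℝ) ≤ U * (A (h + (k:ℕ)) z : ℝ) := by
          intro k
          have hk1 : n - s ≤ h + (k:ℕ) := by omega
          have hk2 : h + (k:ℕ) < n := by have := k.isLt; omega
          have hw := hwin (h + (k:ℕ)) hk1 hk2
          have hAz : (0:ℝ) < (A (h + (k:ℕ)) z : ℝ) := by
            exact_mod_cast hApos (h + (k:ℕ)) (by omega)
          rw [div_le_iff₀ hAz] at hw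
          linarith [hw]
        -- (1)
        have h1 : B * (U * (A (n-1) z : ℝ) - (A (n-1) i : ℝ)) ≤ U * (A n z : ℝ) - (A n i : ℝ) := by
          have hterm : ∀ k ∈ Finset.univ.erase z,
              (0:ℝ) ≤ (⌊τ h k / τ h z⌋ : ℝ) * (U * (A (h + (k:ℕ)) z : ℝ) - (A (h + (k:ℕ)) i : ℝ)) := by
            intro k _
            apply mul_nonneg
            · exact_mod_cast hbnn h k
            · linarith [hwin' k]
          have hsingle : B * (U * (A (h + (l:ℕ)) z : ℝ) - (A (h + (l:ℕ)) i : ℝ))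
              ≤ ∑ k ∈ Finset.univ.erase z,
                  (⌊τ h k / τ h z⌋ : ℝ) * (U * (A (h + (k:ℕ)) z : ℝ) - (A (h + (k:ℕ)) i : ℝ)) := by
            apply Finset.single_le_sum hterm (Finset.mem_erase.mpr ⟨hlz, Finset.mem_univ _⟩)
          have hln : h + (l : ℕ) = n - 1 := by rw [hlval]; omega
          rw [hln] at hsingle
          have hexp : ∑ k ∈ Finset.univ.erase z,
              (⌊τ h k / τ h z⌋ : ℝ) * (U * (A (h + (k:ℕ)) z : ℝ) - (A (h + (k:ℕ)) i : ℝ))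
              = U * (∑ k ∈ Finset.univ.erase z, (⌊τ h k / τ h z⌋ : ℝ) * (A (h + (k:ℕ)) z : ℝ))
                - ∑ k ∈ Finset.univ.erase z, (⌊τ h k / τ h z⌋ : ℝ) * (A (h + (k:ℕ)) i : ℝ) := by
            rw [Finset.mul_sum, ← Finset.sum_sub_distrib]
            exact Finset.sum_congr rfl fun k _ => by ring
          rw [hexp] at hsingle
          have hwh := hwin' z
          rw [show h + (z:ℕ) = h from rfl] at hwh
          have hexpand : U * (A n z : ℝ) - (A n i : ℝ)
              = (U * (A h z : ℝ) - (A h i : ℝ))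
                + (U * (∑ k ∈ Finset.univ.erase z, (⌊τ h k / τ h z⌋ : ℝ) * (A (h + (k:ℕ)) z : ℝ))
                   - ∑ k ∈ Finset.univ.erase z, (⌊τ h k / τ h z⌋ : ℝ) * (A (h + (k:ℕ)) i : ℝ)) := by
            rw [hri, hrz]; ring
          linarith [hsingle, hwh, hexpand]
        -- (2)
        have h2 : (A n z : ℝ) ≤ (s:ℝ) * B * (A (n-1) z : ℝ) := by
          have hsum_le : ∑ k ∈ Finset.univ.erase z, (⌊τ h k / τ h z⌋ : ℝ) * (A (h + (k:ℕ)) z : ℝ)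
              ≤ ∑ k ∈ Finset.univ.erase z, B * (A (n-1) z : ℝ) := by
            apply Finset.sum_le_sum
            intro k hk
            have hbk : (⌊τ h k / τ h z⌋ : ℝ) ≤ B := by
              rw [hBdef]; exact_mod_cast hble' h hh1 k
            have hbknn : (0:ℝ) ≤ (⌊τ h k / τ h z⌋ : ℝ) := by exact_mod_cast hbnn h k
            have hAle : (A (h + (k:ℕ)) z : ℝ) ≤ (A (n-1) z : ℝ) := by
              have := hAmono (h + (k:ℕ)) (n-1) (by omega) (by have := k.isLt; omega)
              exact_mod_cast this
            have hAnn : (0:ℝ) ≤ (A (h + (k:ℕ)) z : ℝ) := Nat.cast_nonneg _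
            exact mul_le_mul hbk hAle hAnn (le_trans zero_le_one hB1)
          have hcard : ∑ k ∈ Finset.univ.erase z, B * (A (n-1) z : ℝ)
              = ((s - 1 : ℕ) : ℝ) * (B * (A (n-1) z : ℝ)) := by
            rw [Finset.sum_const, nsmul_eq_mul]
            congr 1
            rw [Finset.card_erase_of_mem (Finset.mem_univ _), Finset.card_univ, Fintype.card_fin]
          have hAh : (A h z : ℝ) ≤ (A (n-1) z : ℝ) := by
            have := hAmono h (n-1) (by omega) (by omega)
            exact_mod_cast this
          have hAhB : (A h z : ℝ) ≤ B * (A (n-1) z : ℝ) :=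
            le_trans hAh (le_mul_of_one_le_left (le_of_lt haz1) hB1)
          have hcast : ((s - 1 : ℕ) : ℝ) = (s:ℝ) - 1 := by
            have : (1:ℕ) ≤ s := by omega
            push_cast [this]
            ring
          rw [hcard, hcast] at hsum_le
          have hfin : ((s:ℝ) - 1) * (B * (A (n-1) z : ℝ)) + B * (A (n-1) z : ℝ)
              = (s:ℝ) * B * (A (n-1) z : ℝ) := by ring
          linarith [hrz, hsum_le, hAhB]
        -- combine
        have hXnn : (0:ℝ) ≤ U * (A (n-1) z : ℝ) - (A (n-1) i : ℝ) := by
          have hw := hwin (n-1) (by omega) (by omega)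
          rw [div_le_iff₀ haz1] at hw
          linarith
        have e1 : U - (A (n-1) i : ℝ) / (A (n-1) z : ℝ)
            = (U * (A (n-1) z : ℝ) - (A (n-1) i : ℝ)) / (A (n-1) z : ℝ) := by
          field_simp
        have e2 : U - (A n i : ℝ) / (A n z : ℝ)
            = (U * (A n z : ℝ) - (A n i : ℝ)) / (A n z : ℝ) := by
          field_simp
        rw [e1, e2, mul_div_assoc', div_le_div_iff₀ haz1 hazn]
        set X := U * (A (n-1) z : ℝ) - (A (n-1) i : ℝ)
        set Y := U * (A n z : ℝ) - (A n i : ℝ)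
        have hs_nn : (0:ℝ) ≤ (s:ℝ) := Nat.cast_nonneg _
        linarith [mul_le_mul_of_nonneg_left h2 hXnn,
          mul_le_mul_of_nonneg_left h1 (mul_nonneg hs_nn (le_of_lt haz1))]
      · -- H3
        intro n hn u hwin
        set h := n - s with hhdef
        have hh1 : 1 ≤ h := by omega
        have hhs : h + s = n := by omega
        have hri := hrec h i
        have hrz := hrec h z
        rw [hhs] at hri hrz
        set B : ℝ := (⌊τ h l / τ h z⌋ : ℝ) with hBdef
        have hB1 : (1:ℝ) ≤ B := by
          rw [hBdef]; exact_mod_cast hb1' h hh1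
        have haz1 : (0:ℝ) < (A (n-1) z : ℝ) := by
          exact_mod_cast hApos (n-1) (by omega)
        have hazn : (0:ℝ) < (A n z : ℝ) := by
          exact_mod_cast hApos n (by omega)
        have hwin' : ∀ k : Fin s, u * (A (h + (k:ℕ)) z : ℝ) ≤ (A (h + (k:ℕ)) i : ℝ) := by
          intro k
          have hk1 : n - s ≤ h + (k:ℕ) := by omega
          have hk2 : h + (k:ℕ) < n := by have := k.isLt; omega
          have hw := hwin (h + (k:ℕ)) hk1 hk2
          have hAz : (0:ℝ) < (A (h + (k:ℕ)) z : ℝ) := by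
            exact_mod_cast hApos (h + (k:ℕ)) (by omega)
          rw [le_div_iff₀ hAz] at hw
          linarith [hw]
        have h1 : B * ((A (n-1) i : ℝ) - u * (A (n-1) z : ℝ)) ≤ (A n i : ℝ) - u * (A n z : ℝ) := by
          have hterm : ∀ k ∈ Finset.univ.erase z,
              (0:ℝ) ≤ (⌊τ h k / τ h z⌋ : ℝ) * ((A (h + (k:ℕ)) i : ℝ) - u * (A (h + (k:ℕ)) z : ℝ)) := by
            intro k _
            apply mul_nonneg
            · exact_mod_cast hbnn h k
            · linarith [hwin' k]
          have hsingle : B * ((A (h + (l:ℕ)) i : ℝ) - u * (A (h + (l:ℕ)) z : ℝ))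
              ≤ ∑ k ∈ Finset.univ.erase z,
                  (⌊τ h k / τ h z⌋ : ℝ) * ((A (h + (k:ℕ)) i : ℝ) - u * (A (h + (k:ℕ)) z : ℝ)) := by
            apply Finset.single_le_sum hterm (Finset.mem_erase.mpr ⟨hlz, Finset.mem_univ _⟩)
          have hln : h + (l : ℕ) = n - 1 := by rw [hlval]; omega
          rw [hln] at hsingle
          have hexp : ∑ k ∈ Finset.univ.erase z,
              (⌊τ h k / τ h z⌋ : ℝ) * ((A (h + (k:ℕ)) i : ℝ) - u * (A (h + (k:ℕ)) z : ℝ))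
              = (∑ k ∈ Finset.univ.erase z, (⌊τ h k / τ h z⌋ : ℝ) * (A (h + (k:ℕ)) i : ℝ))
                - u * (∑ k ∈ Finset.univ.erase z, (⌊τ h k / τ h z⌋ : ℝ) * (A (h + (k:ℕ)) z : ℝ)) := by
            rw [Finset.mul_sum, ← Finset.sum_sub_distrib]
            exact Finset.sum_congr rfl fun k _ => by ring
          rw [hexp] at hsingle
          have hwh := hwin' z
          rw [show h + (z:ℕ) = h from rfl] at hwh
          have hexpand : (A n i : ℝ) - u * (A n z : ℝ)
              = ((A h i : ℝ) - u * (A h z : ℝ))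
                + ((∑ k ∈ Finset.univ.erase z, (⌊τ h k / τ h z⌋ : ℝ) * (A (h + (k:ℕ)) i : ℝ))
                   - u * (∑ k ∈ Finset.univ.erase z, (⌊τ h k / τ h z⌋ : ℝ) * (A (h + (k:ℕ)) z : ℝ))) := by
            rw [hri, hrz]; ring
          linarith [hsingle, hwh, hexpand]
        have h2 : (A n z : ℝ) ≤ (s:ℝ) * B * (A (n-1) z : ℝ) := by
          have hsum_le : ∑ k ∈ Finset.univ.erase z, (⌊τ h k / τ h z⌋ : ℝ) * (A (h + (k:ℕ)) z : ℝ)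
              ≤ ∑ k ∈ Finset.univ.erase z, B * (A (n-1) z : ℝ) := by
            apply Finset.sum_le_sum
            intro k hk
            have hbk : (⌊τ h k / τ h z⌋ : ℝ) ≤ B := by
              rw [hBdef]; exact_mod_cast hble' h hh1 k
            have hbknn : (0:ℝ) ≤ (⌊τ h k / τ h z⌋ : ℝ) := by exact_mod_cast hbnn h k
            have hAle : (A (h + (k:ℕ)) z : ℝ) ≤ (A (n-1) z : ℝ) := by
              have := hAmono (h + (k:ℕ)) (n-1) (by omega) (by have := k.isLt; omega)
              exact_mod_cast this
            have hAnn : (0:ℝ) ≤ (A (h + (k:ℕ)) z : ℝ) := Nat.cast_nonneg _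
            exact mul_le_mul hbk hAle hAnn (le_trans zero_le_one hB1)
          have hcard : ∑ k ∈ Finset.univ.erase z, B * (A (n-1) z : ℝ)
              = ((s - 1 : ℕ) : ℝ) * (B * (A (n-1) z : ℝ)) := by
            rw [Finset.sum_const, nsmul_eq_mul]
            congr 1
            rw [Finset.card_erase_of_mem (Finset.mem_univ _), Finset.card_univ, Fintype.card_fin]
          have hAh : (A h z : ℝ) ≤ (A (n-1) z : ℝ) := by
            have := hAmono h (n-1) (by omega) (by omega)
            exact_mod_cast this
          have hAhB : (A h z : ℝ) ≤ B * (A (n-1) z : ℝ) :=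
            le_trans hAh (le_mul_of_one_le_left (le_of_lt haz1) hB1)
          have hcast : ((s - 1 : ℕ) : ℝ) = (s:ℝ) - 1 := by
            have : (1:ℕ) ≤ s := by omega
            push_cast [this]
            ring
          rw [hcard, hcast] at hsum_le
          have hfin : ((s:ℝ) - 1) * (B * (A (n-1) z : ℝ)) + B * (A (n-1) z : ℝ)
              = (s:ℝ) * B * (A (n-1) z : ℝ) := by ring
          linarith [hrz, hsum_le, hAhB]
        have hXnn : (0:ℝ) ≤ (A (n-1) i : ℝ) - u * (A (n-1) z : ℝ) := by
          have hw := hwin (n-1) (by omega) (by omega)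
          rw [le_div_iff₀ haz1] at hw
          linarith
        have e1 : (A (n-1) i : ℝ) / (A (n-1) z : ℝ) - u
            = ((A (n-1) i : ℝ) - u * (A (n-1) z : ℝ)) / (A (n-1) z : ℝ) := by
          field_simp
        have e2 : (A n i : ℝ) / (A n z : ℝ) - u
            = ((A n i : ℝ) - u * (A n z : ℝ)) / (A n z : ℝ) := by
          field_simp
        rw [e1, e2, mul_div_assoc', div_le_div_iff₀ haz1 hazn]
        set X := (A (n-1) i : ℝ) - u * (A (n-1) z : ℝ)
        set Y := (A n i : ℝ) - u * (A n z : ℝ)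
        have hs_nn : (0:ℝ) ≤ (s:ℝ) := Nat.cast_nonneg _
        linarith [mul_le_mul_of_nonneg_left h2 hXnn,
          mul_le_mul_of_nonneg_left h1 (mul_nonneg hs_nn (le_of_lt haz1))]
    refine ⟨hconv, ?_⟩
    -- ===== part 2 =====
    intro d1 d2 hd
    have hτz : (0:ℝ) < τ 0 z := hpos 0 z
    have hlim : Tendsto (fun n : ℕ => ∑ i : Fin s, ((d2 i : ℝ) - (d1 i : ℝ)) * ((A n i : ℝ) / (A n z : ℝ)))
        atTop (nhds (∑ i : Fin s, ((d2 i : ℝ) - (d1 i : ℝ)) * (τ 0 i / τ 0 z))) := by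
      apply tendsto_finset_sum
      intro i _
      exact (hconv i).const_mul _
    have hlimpos : 0 < ∑ i : Fin s, ((d2 i : ℝ) - (d1 i : ℝ)) * (τ 0 i / τ 0 z) := by
      have : ∑ i : Fin s, ((d2 i : ℝ) - (d1 i : ℝ)) * (τ 0 i / τ 0 z)
          = ((∑ i : Fin s, (d2 i : ℝ) * τ 0 i) - ∑ i : Fin s, (d1 i : ℝ) * τ 0 i) / τ 0 z := by
        rw [← Finset.sum_sub_distrib, Finset.sum_div]
        refine Finset.sum_congr rfl fun i _ => ?_
        field_simp
      rw [this]
      apply div_pos _ hτz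
      linarith
    have hev : ∀ᶠ n in atTop,
        0 < ∑ i : Fin s, ((d2 i : ℝ) - (d1 i : ℝ)) * ((A n i : ℝ) / (A n z : ℝ)) :=
      hlim.eventually (eventually_gt_nhds hlimpos)
    rw [eventually_atTop] at hev
    obtain ⟨H1, hH1⟩ := hev
    refine ⟨max H1 (2 * s), fun h hh j => ?_⟩
    set n := h + (j : ℕ) with hndef
    have hn1 : H1 ≤ n := by
      have := le_max_left H1 (2 * s)
      omega
    have hn2 : 2 * s ≤ n := by
      have := le_max_right H1 (2 * s)
      omega
    have hFn := hH1 n hn1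
    have hAz : (0:ℝ) < (A n z : ℝ) := by exact_mod_cast hApos n hn2
    have hnum : 0 < ∑ i : Fin s, ((d2 i : ℝ) - (d1 i : ℝ)) * (A n i : ℝ) := by
      have heq : ∑ i : Fin s, ((d2 i : ℝ) - (d1 i : ℝ)) * ((A n i : ℝ) / (A n z : ℝ))
          = (∑ i : Fin s, ((d2 i : ℝ) - (d1 i : ℝ)) * (A n i : ℝ)) / (A n z : ℝ) := by
        rw [Finset.sum_div]
        exact Finset.sum_congr rfl fun i _ => by ring
      rw [heq] at hFn
      have := mul_pos hFn hAz
      rwa [div_mul_cancel₀ _ (ne_of_gt hAz)] at this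
    have hreal : (∑ i : Fin s, (d1 i : ℝ) * (A n i : ℝ)) < ∑ i : Fin s, (d2 i : ℝ) * (A n i : ℝ) := by
      rw [← sub_pos, ← Finset.sum_sub_distrib]
      calc (0:ℝ) < ∑ i : Fin s, ((d2 i : ℝ) - (d1 i : ℝ)) * (A n i : ℝ) := hnum
        _ = ∑ i : Fin s, ((d2 i : ℝ) * (A n i : ℝ) - (d1 i : ℝ) * (A n i : ℝ)) := by
          exact Finset.sum_congr rfl fun i _ => by ring
    have : ((∑ i : Fin s, d1 i * A n i : ℕ) : ℝ) < ((∑ i : Fin s, d2 i * A n i : ℕ) : ℝ) := by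
      push_cast
      exact hreal
    exact_mod_cast this
end

section
/- Let M = (a_{ij}) be an n×n unimodular matrix of nonnegative integers with adjugate A satisfying A_{1j} = 0 for j > 2 and a_{11}A_{11} + a_{12}A_{12} = 1 with A_{11} < 0 < A_{12}. Set m = ⌊−A_{11}/A_{12}⌋. Then a_{12} − m·a_{11} ≥ 1 and a_{i2} − m·a_{i1} ≥ 0 for 2 ≤ i ≤ n; that is, subtracting m times the first column from the second column of M yields a matrix with nonnegative entries whose (1,2) entry is at least 1. -/
/-- Let `M = (a_{ij})` be an `n×n` unimodular matrix of nonnegative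
integers with adjugate `A` (the paper's `A_{1j}` is `(adjugate M) j 0`) satisfying
`A_{1j} = 0` for `j > 2` and `a_{11}A_{11} + a_{12}A_{12} = 1` (automatic from
`det M = 1`) with `A_{11} < 0 < A_{12}`.  Set `m = ⌊-A_{11}/A_{12}⌋`.  Then
`a_{12} - m·a_{11} ≥ 1` and `a_{i2} - m·a_{i1} ≥ 0` for `2 ≤ i ≤ n`: subtracting `m`
times the first column from the second column of `M` yields a matrix with nonnegative
entries whose `(1,2)` entry is at least `1`. -/
theorem stmt_13 (n : ℕ) (hn : 2 ≤ n)
    (M : Matrix (Fin n) (Fin n) ℤ)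
    (hM0 : ∀ i j, 0 ≤ M i j)
    (hdet : M.det = 1)
    (hvan : ∀ j : Fin n, 2 ≤ (j : ℕ) → M.adjugate j ⟨0, by omega⟩ = 0)
    (h11 : M.adjugate ⟨0, by omega⟩ ⟨0, by omega⟩ < 0)
    (h12 : 0 < M.adjugate ⟨1, by omega⟩ ⟨0, by omega⟩) :
    1 ≤ M ⟨0, by omega⟩ ⟨1, by omega⟩ -
        (-(M.adjugate ⟨0, by omega⟩ ⟨0, by omega⟩) /
          M.adjugate ⟨1, by omega⟩ ⟨0, by omega⟩) * M ⟨0, by omega⟩ ⟨0, by omega⟩ ∧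
      ∀ i : Fin n, 0 < (i : ℕ) →
        0 ≤ M i ⟨1, by omega⟩ -
          (-(M.adjugate ⟨0, by omega⟩ ⟨0, by omega⟩) /
            M.adjugate ⟨1, by omega⟩ ⟨0, by omega⟩) * M i ⟨0, by omega⟩ := by
  have h0 : (0 : ℕ) < n := by omega
  set z0 : Fin n := ⟨0, by omega⟩
  set z1 : Fin n := ⟨1, by omega⟩
  set A0 := M.adjugate z0 z0 with hA0
  set A1 := M.adjugate z1 z0 with hA1
  set m := (-A0) / A1 with hm
  -- key linear relation for each row i
  have key : ∀ i : Fin n,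
      M i z0 * A0 + M i z1 * A1 = if i = z0 then 1 else 0 := by
    intro i
    have hmul := Matrix.mul_adjugate M
    have := congrFun (congrFun hmul i) z0
    rw [Matrix.mul_apply] at this
    have hsum : ∑ j, M i j * M.adjugate j z0 = M i z0 * A0 + M i z1 * A1 := by
      have hsub : ({z0, z1} : Finset (Fin n)) ⊆ Finset.univ := Finset.subset_univ _
      rw [← Finset.sum_subset hsub]
      · rw [Finset.sum_pair (by simp [z0, z1, Fin.ext_iff])]
      · intro j _ hj
        have hj2 : 2 ≤ (j : ℕ) := by
          simp only [Finset.mem_insert, Finset.mem_singleton] at hj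
          push_neg at hj
          have := hj.1; have := hj.2
          simp [z0, z1, Fin.ext_iff] at *
          omega
        rw [hvan j hj2, mul_zero]
    rw [hsum] at this
    rw [this, hdet]
    simp [Matrix.one_apply, eq_comm]
  -- m * A1 ≤ -A0
  have hmA : m * A1 ≤ -A0 := by
    rw [hm]
    exact Int.ediv_mul_le _ (ne_of_gt h12)
  have main : ∀ i : Fin n,
      (if i = z0 then (1:ℤ) else 0) ≤ A1 * (M i z1 - m * M i z0) := by
    intro i
    have hk := key i
    have : A1 * (M i z1 - m * M i z0) = (M i z0 * A0 + M i z1 * A1) + M i z0 * (-A0 - m * A1) := by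
      ring
    rw [this, hk]
    have : 0 ≤ M i z0 * (-A0 - m * A1) := mul_nonneg (hM0 i z0) (by omega)
    omega
  constructor
  · have h := main z0
    simp only [if_pos rfl, if_true] at h
    by_contra hc
    push_neg at hc
    have hx : M z0 z1 - m * M z0 z0 ≤ 0 := by omega
    nlinarith
  · intro i hi
    have hne : i ≠ z0 := by
      intro h; rw [h] at hi; simp [z0] at hi
    have h := main i
    rw [if_neg hne] at h
    by_contra hc
    push_neg at hc
    nlinarith
end
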